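/- Let A be a linear operator on H_N that anticommutes with Π^x and satisfies Π^z A Π^z = εA for some ε ∈ {+1,−1} (as holds for any product of Pauli operators anticommuting with Π^x). Then |⟨g_1| A |g_2⟩| ≤ |⟨s_{p_1}| A Π^z |s_{p_2}⟩|. -/

import Mathlib

/-!
All kink states have the same `Π^x`-eigenvalue `η = ±1`, so `|s_p⟩` lies in the `η`-eigenspace
of `Π^x` and, `N` being odd, `Π^z|s_p⟩` in the `(-η)`-eigenspace. Since `A` anticommutes with
`Π^x` it exchanges these orthogonal eigenspaces, so `⟨s_{p₁}|A|s_{p₂}⟩` and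
`⟨Π^z s_{p₁}|A|Π^z s_{p₂}⟩` vanish, while `Π^z A Π^z = εA` turns `⟨Π^z s_{p₁}|A|s_{p₂}⟩` into
`ε⟨s_{p₁}|AΠ^z|s_{p₂}⟩`. Hence `⟨g₁|A|g₂⟩ = (ū₁v₂ + ε v̄₁u₂)⟨s_{p₁}|AΠ^z|s_{p₂}⟩`, and the
coefficient has modulus at most `|u₁||v₂| + |v₁||u₂| ≤ 1`.
-/

open Complex BigOperators Finset

namespace SpinChain

/-- Spin configurations on `N` sites (sites mod `N`): `true` = +1, `false` = −1. -/
abbrev Config (N : ℕ) := ZMod N → Bool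

/-- The Hilbert space `H_N`: complex functions on spin configurations. -/
abbrev HS (N : ℕ) := Config N → ℂ

/-- The ±1 value of a spin. -/
def sgn (b : Bool) : ℂ := if b then 1 else -1

/-- Standard basis vector `e_s`. -/
def basis (N : ℕ) [NeZero N] (s : Config N) : HS N := fun t => if t = s then 1 else 0

/-- Inner product `⟨f|g⟩ = ∑_s conj (f s) * g s` (antilinear in the first argument). -/
noncomputable def braket (N : ℕ) [NeZero N] (f g : HS N) : ℂ :=
  ∑ s, (starRingEnd ℂ) (f s) * g s

/-- Flip the spin at site `j`. -/
def flipAt (N : ℕ) (j : ZMod N) (s : Config N) : Config N :=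
  Function.update s j (!(s j))

/-- Pauli operator σ^x_j : acts diagonally, `σ^x_j e_s = s(j) e_s`. -/
def sigmaX (N : ℕ) (j : ZMod N) : Module.End ℂ (HS N) where
  toFun f := fun s => sgn (s j) * f s
  map_add' f g := by funext s; simp [mul_add]
  map_smul' c f := by funext s; simp [smul_eq_mul]; ring

/-- Pauli operator σ^z_j : flips the spin at site `j`, `σ^z_j e_s = e_{s'}`. -/
def sigmaZ (N : ℕ) (j : ZMod N) : Module.End ℂ (HS N) where
  toFun f := fun s => f (flipAt N j s)
  map_add' _ _ := rfl
  map_smul' _ _ := rfl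

/-- Pauli operator σ^y_j = i σ^x_j σ^z_j. -/
noncomputable def sigmaY (N : ℕ) (j : ZMod N) : Module.End ℂ (HS N) :=
  Complex.I • (sigmaX N j * sigmaZ N j)

/-- Kinds of single-site operators: the identity and the three Pauli matrices. -/
inductive PKind | id | x | y | z
  deriving DecidableEq

/-- Single-site operator of a given kind at site `j`. -/
noncomputable def pauli (N : ℕ) : PKind → ZMod N → Module.End ℂ (HS N)
  | PKind.id => fun _ => 1
  | PKind.x => sigmaX N
  | PKind.y => sigmaY N
  | PKind.z => sigmaZ N

/-- Parity operator Π^α = σ^α_1 σ^α_2 ⋯ σ^α_N. -/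
noncomputable def parity (N : ℕ) (α : PKind) : Module.End ℂ (HS N) :=
  ((List.range N).map (fun j => pauli N α ((j + 1 : ℕ) : ZMod N))).prod

/-- The configuration of the kink state |j⟩: `s(j+r) = (−1)^{r+1}` for `r = 1,…,N`
(the single ferromagnetic bond is between sites `j` and `j+1`). -/
def kinkConfig (N : ℕ) (j : ZMod N) : Config N :=
  fun k => ((k - j).val == 0) || ((k - j).val % 2 == 1)

/-- Kink state |j⟩. -/
def kink (N : ℕ) [NeZero N] (j : ZMod N) : HS N := basis N (kinkConfig N j)

/-- Momentum state `|s_p⟩ = N^{-1/2} ∑_{j=1}^N e^{i p j} |j⟩`. -/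
noncomputable def momState (N : ℕ) [NeZero N] (p : ℝ) : HS N :=
  (Real.sqrt N : ℂ)⁻¹ • ∑ j ∈ Finset.range N,
    Complex.exp (Complex.I * p * ((j : ℂ) + 1)) • kink N ((j + 1 : ℕ) : ZMod N)

lemma sgn_mul_self (b : Bool) : sgn b * sgn b = 1 := by cases b <;> simp [sgn]

lemma conj_sgn (b : Bool) : (starRingEnd ℂ) (sgn b) = sgn b := by cases b <;> simp [sgn]

lemma sgn_not (b : Bool) : sgn (!b) = -sgn b := by cases b <;> simp [sgn]

section Braket

variable {N : ℕ} [NeZero N]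

lemma braket_add_left (f f' g : HS N) : braket N (f + f') g = braket N f g + braket N f' g := by
  simp [braket, add_mul, Finset.sum_add_distrib]

lemma braket_add_right (f g g' : HS N) : braket N f (g + g') = braket N f g + braket N f g' := by
  simp [braket, mul_add, Finset.sum_add_distrib]

lemma braket_smul_left (a : ℂ) (f g : HS N) :
    braket N (a • f) g = (starRingEnd ℂ) a * braket N f g := by
  simp [braket, Finset.mul_sum, mul_assoc]

lemma braket_smul_right (a : ℂ) (f g : HS N) : braket N f (a • g) = a * braket N f g := by
  simp [braket, Finset.mul_sum, mul_left_comm]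

lemma braket_neg_right (f g : HS N) : braket N f (-g) = -braket N f g := by
  simp [braket, Finset.sum_neg_distrib]

end Braket

noncomputable def spinSign (N : ℕ) [NeZero N] (s : Config N) : ℂ := ∏ k, sgn (s k)

section SpinSign

variable {N : ℕ} [NeZero N]

lemma spinSign_eq_one_or_neg_one (s : Config N) : spinSign N s = 1 ∨ spinSign N s = -1 := by
  refine mul_self_eq_one_iff.mp ?_
  simp [spinSign, ← Finset.prod_mul_distrib, sgn_mul_self]

lemma conj_spinSign (s : Config N) : (starRingEnd ℂ) (spinSign N s) = spinSign N s := by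
  simp [spinSign, conj_sgn]

lemma spinSign_not (hN : Odd N) (s : Config N) :
    spinSign N (fun k => !(s k)) = -spinSign N s := by
  simp only [spinSign, sgn_not, Finset.prod_neg, Finset.card_univ, ZMod.card, hN.neg_one_pow,
    neg_one_mul]

lemma spinSign_kinkConfig (j : ZMod N) :
    spinSign N (kinkConfig N j) = spinSign N (kinkConfig N 0) :=
  Fintype.prod_equiv (Equiv.subRight j) _ _ fun k => by simp [kinkConfig]

end SpinSign

def sites (N : ℕ) : List (ZMod N) := (List.range N).map fun j => ((j + 1 : ℕ) : ZMod N)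

lemma parity_eq_prod_sites (N : ℕ) (α : PKind) :
    parity N α = ((sites N).map (pauli N α)).prod := by
  rw [sites, List.map_map]; rfl

lemma sites_nodup (N : ℕ) : (sites N).Nodup := by
  refine List.nodup_range.map_on fun a ha b hb hab => ?_
  rw [List.mem_range] at ha hb
  have hab' : ((a : ℕ) : ZMod N) = b := by push_cast at hab; exact add_right_cancel hab
  simpa [ZMod.val_natCast_of_lt ha, ZMod.val_natCast_of_lt hb] using congrArg ZMod.val hab'

lemma mem_sites (N : ℕ) [NeZero N] (k : ZMod N) : k ∈ sites N :=
  List.mem_map.mpr ⟨(k - 1).val, List.mem_range.mpr (ZMod.val_lt _), by simp⟩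

lemma prod_sigmaX_apply {N : ℕ} (l : List (ZMod N)) (f : HS N) (s : Config N) :
    (l.map (sigmaX N)).prod f s = (l.map fun j => sgn (s j)).prod * f s := by
  induction l with
  | nil => simp
  | cons j l ih =>
    simp only [List.map_cons, List.prod_cons, Module.End.mul_apply]
    change sgn (s j) * (l.map (sigmaX N)).prod f s = _
    rw [ih, mul_assoc]

lemma prod_sigmaZ_apply {N : ℕ} {l : List (ZMod N)} (hl : l.Nodup) (f : HS N) (s : Config N) :
    (l.map (sigmaZ N)).prod f s = f fun k => if k ∈ l then !(s k) else s k := by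
  induction l generalizing s with
  | nil => simp
  | cons j l ih =>
    obtain ⟨hj, hl⟩ := List.nodup_cons.mp hl
    simp only [List.map_cons, List.prod_cons, Module.End.mul_apply]
    change (l.map (sigmaZ N)).prod f (flipAt N j s) = _
    rw [ih hl]
    congr 1
    funext k
    by_cases hkj : k = j
    · subst hkj; simp [flipAt, hj]
    · simp [flipAt, hkj]

section Parity

variable {N : ℕ} [NeZero N]

lemma parity_x_apply (f : HS N) (s : Config N) : parity N PKind.x f s = spinSign N s * f s := by
  rw [parity_eq_prod_sites]
  refine (prod_sigmaX_apply _ f s).trans (congrArg (· * f s) ?_)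
  rw [← List.prod_toFinset _ (sites_nodup N), spinSign]
  have huniv : (sites N).toFinset = Finset.univ :=
    Finset.eq_univ_of_forall fun k => List.mem_toFinset.mpr (mem_sites N k)
  rw [huniv]

lemma parity_z_apply (f : HS N) (s : Config N) : parity N PKind.z f s = f fun k => !(s k) := by
  rw [parity_eq_prod_sites]
  exact (prod_sigmaZ_apply (sites_nodup N) f s).trans (by simp [mem_sites])

lemma parity_z_parity_z (f : HS N) : parity N PKind.z (parity N PKind.z f) = f := by
  funext s; simp [parity_z_apply]

-- For odd `N`, flipping every spin negates `∏ₖ s(k)`.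
lemma parity_x_parity_z (hN : Odd N) (f : HS N) :
    parity N PKind.x (parity N PKind.z f) = -parity N PKind.z (parity N PKind.x f) := by
  funext s
  simp [parity_x_apply, parity_z_apply, spinSign_not hN]

lemma braket_parity_x_left (f g : HS N) :
    braket N (parity N PKind.x f) g = braket N f (parity N PKind.x g) :=
  Finset.sum_congr rfl fun s _ => by
    rw [parity_x_apply, parity_x_apply, map_mul, conj_spinSign]; ring

lemma braket_parity_z_left (f g : HS N) :
    braket N (parity N PKind.z f) g = braket N f (parity N PKind.z g) := by
  have hflip : Function.Involutive fun s : Config N => fun k => !(s k) := fun s => by simp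
  exact Fintype.sum_equiv hflip.toPerm _ _ fun s => by simp [parity_z_apply]

end Parity

section Momentum

variable {N : ℕ} [NeZero N]

lemma parity_x_kink (j : ZMod N) :
    parity N PKind.x (kink N j) = spinSign N (kinkConfig N 0) • kink N j := by
  funext s
  rw [parity_x_apply, ← spinSign_kinkConfig j]
  by_cases h : s = kinkConfig N j
  · subst h; rfl
  · simp [kink, basis, h]

lemma parity_x_momState (p : ℝ) :
    parity N PKind.x (momState N p) = spinSign N (kinkConfig N 0) • momState N p := by
  simp only [momState, map_smul, map_sum, parity_x_kink, smul_comm _ (spinSign N _),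
    ← Finset.smul_sum]

end Momentum

-- `A` maps the `a`-eigenspace of `P` into the `(-a)`-eigenspace, which is orthogonal to it.
lemma braket_apply_eq_zero_of_anticommute {N : ℕ} [NeZero N] {A P : Module.End ℂ (HS N)}
    (hP : ∀ f g, braket N (P f) g = braket N f (P g)) (hanti : A * P = -(P * A))
    {a : ℂ} (ha : a = 1 ∨ a = -1) {f g : HS N} (hf : P f = a • f) (hg : P g = a • g) :
    braket N f (A g) = 0 := by
  have hAP : A (P g) = -P (A g) := LinearMap.congr_fun hanti g
  have h : a * braket N f (A g) = -(a * braket N f (A g)) := by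
    have hconj : (starRingEnd ℂ) a = a := by rcases ha with rfl | rfl <;> simp
    calc a * braket N f (A g) = braket N f (A (P g)) := by rw [hg, map_smul, braket_smul_right]
      _ = -braket N (P f) (A g) := by rw [hAP, braket_neg_right, hP]
      _ = -(a * braket N f (A g)) := by rw [hf, braket_smul_left, hconj]
  have ha0 : a ≠ 0 := by rcases ha with rfl | rfl <;> norm_num
  exact (mul_eq_zero.mp (self_eq_neg.mp h)).resolve_left ha0

lemma norm_mul_add_norm_mul_le_one {u₁ v₁ u₂ v₂ : ℂ} (h₁ : ‖u₁‖ ^ 2 + ‖v₁‖ ^ 2 = 1)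
    (h₂ : ‖u₂‖ ^ 2 + ‖v₂‖ ^ 2 = 1) : ‖u₁‖ * ‖v₂‖ + ‖v₁‖ * ‖u₂‖ ≤ 1 := by
  nlinarith [sq_nonneg (‖u₁‖ - ‖v₂‖), sq_nonneg (‖v₁‖ - ‖u₂‖)]

section MatrixElements

variable {N : ℕ} [NeZero N] {A : Module.End ℂ (HS N)}

lemma braket_momState_apply_momState
    (hanti : A * parity N PKind.x = -(parity N PKind.x * A)) (p₁ p₂ : ℝ) :
    braket N (momState N p₁) (A (momState N p₂)) = 0 :=
  braket_apply_eq_zero_of_anticommute braket_parity_x_left hanti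
    (spinSign_eq_one_or_neg_one _) (parity_x_momState p₁) (parity_x_momState p₂)

lemma braket_parity_z_momState_apply_parity_z_momState (hN : Odd N)
    (hanti : A * parity N PKind.x = -(parity N PKind.x * A)) (p₁ p₂ : ℝ) :
    braket N (parity N PKind.z (momState N p₁)) (A (parity N PKind.z (momState N p₂))) = 0 := by
  have hflip (p : ℝ) : parity N PKind.x (parity N PKind.z (momState N p)) =
      -spinSign N (kinkConfig N 0) • parity N PKind.z (momState N p) := by
    rw [parity_x_parity_z hN, parity_x_momState, map_smul, neg_smul]
  refine braket_apply_eq_zero_of_anticommute braket_parity_x_left hanti ?_ (hflip p₁) (hflip p₂)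
  rcases spinSign_eq_one_or_neg_one (kinkConfig N 0) with h | h <;> simp [h]

lemma braket_parity_z_apply {ε : ℂ}
    (hz : parity N PKind.z * A * parity N PKind.z = ε • A) (f g : HS N) :
    braket N (parity N PKind.z f) (A g) = ε * braket N f (A (parity N PKind.z g)) := by
  have h := LinearMap.congr_fun hz (parity N PKind.z g)
  simp only [Module.End.mul_apply, LinearMap.smul_apply, parity_z_parity_z] at h
  rw [braket_parity_z_left, h, braket_smul_right]

end MatrixElements

theorem statement_3_general (N : ℕ) [NeZero N] (hN : Odd N)
    (A : Module.End ℂ (HS N))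
    (hanti : A * parity N PKind.x = -(parity N PKind.x * A))
    (ε : ℂ) (hε : ε = 1 ∨ ε = -1)
    (hz : parity N PKind.z * A * parity N PKind.z = ε • A)
    (p₁ p₂ : ℝ)
    (u₁ v₁ u₂ v₂ : ℂ)
    (hu₁ : ‖u₁‖ ^ 2 + ‖v₁‖ ^ 2 = 1)
    (hu₂ : ‖u₂‖ ^ 2 + ‖v₂‖ ^ 2 = 1)
    (g₁ g₂ : HS N)
    (hg₁ : g₁ = u₁ • momState N p₁ + v₁ • parity N PKind.z (momState N p₁))
    (hg₂ : g₂ = u₂ • momState N p₂ + v₂ • parity N PKind.z (momState N p₂)) :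
    ‖braket N g₁ (A g₂)‖ ≤
      ‖braket N (momState N p₁) ((A * parity N PKind.z) (momState N p₂))‖ := by
  set M := braket N (momState N p₁) ((A * parity N PKind.z) (momState N p₂))
  have hexpand : braket N g₁ (A g₂) =
      ((starRingEnd ℂ) u₁ * v₂ + ε * ((starRingEnd ℂ) v₁ * u₂)) * M := by
    simp only [hg₁, hg₂, map_add, map_smul, braket_add_left, braket_add_right, braket_smul_left,
      braket_smul_right, braket_momState_apply_momState hanti,
      braket_parity_z_momState_apply_parity_z_momState hN hanti, braket_parity_z_apply hz]
    simp only [M, Module.End.mul_apply]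
    ring
  have hε₁ : ‖ε‖ = 1 := by rcases hε with rfl | rfl <;> simp
  have hcoeff : ‖(starRingEnd ℂ) u₁ * v₂ + ε * ((starRingEnd ℂ) v₁ * u₂)‖ ≤ 1 :=
    (norm_add_le _ _).trans <| by
      simpa [hε₁] using norm_mul_add_norm_mul_le_one hu₁ hu₂
  rw [hexpand, norm_mul]
  exact mul_le_of_le_one_left (norm_nonneg M) hcoeff

/-- If `A` anticommutes with `Π^x` and `Π^z A Π^z = εA` with `ε ∈ {±1}`,
then `|⟨g₁|A|g₂⟩| ≤ |⟨s_{p₁}|A Π^z|s_{p₂}⟩|`. -/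
theorem statement_3 (N : ℕ) [NeZero N] (hN : Odd N)
    (A : Module.End ℂ (HS N))
    (hanti : A * parity N PKind.x = -(parity N PKind.x * A))
    (ε : ℂ) (hε : ε = 1 ∨ ε = -1)
    (hz : parity N PKind.z * A * parity N PKind.z = ε • A)
    (k₁ k₂ : ℕ) (hk₁ : k₁ < N) (hk₂ : k₂ < N)
    (p₁ p₂ : ℝ) (hp₁ : p₁ = 2 * Real.pi * k₁ / N) (hp₂ : p₂ = 2 * Real.pi * k₂ / N)
    (u₁ v₁ u₂ v₂ : ℂ)
    (hu₁ : ‖u₁‖ ^ 2 + ‖v₁‖ ^ 2 = 1)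
    (hu₂ : ‖u₂‖ ^ 2 + ‖v₂‖ ^ 2 = 1)
    (g₁ g₂ : HS N)
    (hg₁ : g₁ = u₁ • momState N p₁ + v₁ • parity N PKind.z (momState N p₁))
    (hg₂ : g₂ = u₂ • momState N p₂ + v₂ • parity N PKind.z (momState N p₂)) :
    ‖braket N g₁ (A g₂)‖ ≤
      ‖braket N (momState N p₁) ((A * parity N PKind.z) (momState N p₂))‖ :=
  statement_3_general N hN A hanti ε hε hz p₁ p₂ u₁ v₁ u₂ v₂ hu₁ hu₂ g₁ g₂ hg₁ hg₂

end SpinChain
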